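/- For all x ∈ [0, ϖ/2], ∫₀^x sl(t) dt = (1/2)·arcsin(sl²(x)), where arcsin is the ordinary inverse sine function. -/

import Mathlib

/-!
Substituting `t = arcsin_{2,4} u` turns `∫₀ˣ sl t dt` into `∫₀ʸ u / √(1 - u⁴) du` with
`y = sl x`, and `u / √(1 - u⁴)` is the derivative of `arcsin (u²) / 2`.
-/

open Set MeasureTheory Filter

/-- Generalized arcsine: `arcsin_{p,q}(x) = ∫₀ˣ (1 - tᵠ)^(-1/p) dt`. -/
noncomputable def gArcsin (p q x : ℝ) : ℝ := ∫ t in (0:ℝ)..x, (1 - t ^ q) ^ (-(1 / p))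

/-- Generalized pi: `π_{p,q} = 2 ∫₀¹ (1 - tᵠ)^(-1/p) dt`. -/
noncomputable def gPi (p q : ℝ) : ℝ := 2 * gArcsin p q 1

/-- `S` is the generalized sine `sin_{p,q}` (the inverse of `gArcsin p q` on `[0,1]`). -/
def IsGSin (p q : ℝ) (S : ℝ → ℝ) : Prop :=
  ∀ y ∈ Icc (0:ℝ) 1, S (gArcsin p q y) = y

/-- `C` is the generalized cosine `cos_{p,q}`, the derivative of `S = sin_{p,q}`
on `[0, π_{p,q}/2]`. -/
def IsGCos (p q : ℝ) (S C : ℝ → ℝ) : Prop :=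
  ∀ x ∈ Icc (0:ℝ) (gPi p q / 2), HasDerivWithinAt S (C x) (Icc (0:ℝ) (gPi p q / 2)) x

section GeneralizedArcsine

variable {p q : ℝ}

lemma gArcsin_integrand_pos (hq : 0 < q) {t : ℝ} (ht : t ∈ Ico (0:ℝ) 1) :
    0 < (1 - t ^ q) ^ (-(1 / p)) :=
  Real.rpow_pos_of_pos (sub_pos.2 (Real.rpow_lt_one ht.1 ht.2 hq)) _

lemma continuousOn_gArcsin_integrand (hq : 0 < q) :
    ContinuousOn (fun t : ℝ => (1 - t ^ q) ^ (-(1 / p))) (Ico 0 1) := by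
  intro t ht
  refine ContinuousAt.continuousWithinAt (ContinuousAt.rpow_const ?_ (Or.inl ?_))
  · exact continuousAt_const.sub (Real.continuousAt_rpow_const t q (Or.inr hq.le))
  · exact (sub_pos.2 (Real.rpow_lt_one ht.1 ht.2 hq)).ne'

lemma hasDerivAt_gArcsin (hq : 0 < q) {u : ℝ} (hu : u ∈ Ioo (0:ℝ) 1) :
    HasDerivAt (gArcsin p q) ((1 - u ^ q) ^ (-(1 / p))) u := by
  have hsub : Icc 0 u ⊆ Ico (0:ℝ) 1 := Icc_subset_Ico_right hu.2
  have hint : IntervalIntegrable (fun t : ℝ => (1 - t ^ q) ^ (-(1 / p))) volume 0 u :=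
    ((continuousOn_gArcsin_integrand hq).mono (uIcc_of_le hu.1.le ▸ hsub)).intervalIntegrable
  refine intervalIntegral.integral_hasDerivAt_right hint ?_ ?_
  · exact (Measurable.stronglyMeasurable (by fun_prop)).stronglyMeasurableAtFilter
  · exact (continuousOn_gArcsin_integrand hq).continuousAt (Ico_mem_nhds hu.1 hu.2)

/-- The singularity at `t = 1` is dominated by `(1 - t) ^ (-1/p)`, integrable since `1/p < 1`. -/
lemma intervalIntegrable_gArcsin_integrand (hp : 1 < p) (hq : 1 ≤ q) :
    IntervalIntegrable (fun t : ℝ => (1 - t ^ q) ^ (-(1 / p))) volume 0 1 := by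
  have hp0 : 0 < 1 / p := one_div_pos.2 (by linarith)
  have hexp : -1 < -(1 / p) := by
    rw [neg_lt_neg_iff, div_lt_one (by linarith)]; exact hp
  have hdom : IntegrableOn (fun t : ℝ => (1 - t) ^ (-(1 / p))) (Ioo 0 1) := by
    have h := (intervalIntegral.intervalIntegrable_rpow' (a := 0) (b := 1) hexp).comp_sub_left 1
    rw [sub_self, sub_zero] at h
    exact (intervalIntegrable_iff_integrableOn_Ioo_of_le zero_le_one).1 h.symm
  rw [intervalIntegrable_iff_integrableOn_Ioo_of_le zero_le_one]
  refine hdom.mono' ?_ ?_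
  · exact ((continuousOn_gArcsin_integrand (by linarith)).mono
      Ioo_subset_Ico_self).aestronglyMeasurable measurableSet_Ioo
  · refine (ae_restrict_iff' measurableSet_Ioo).2 (ae_of_all _ fun t ht => ?_)
    rw [Real.norm_of_nonneg (gArcsin_integrand_pos (by linarith) (Ioo_subset_Ico_self ht)).le]
    exact Real.rpow_le_rpow_of_nonpos (by linarith [ht.2])
      (by linarith [Real.rpow_le_self_of_le_one ht.1.le ht.2.le hq]) (by linarith)

@[simp] lemma gArcsin_zero : gArcsin p q 0 = 0 := intervalIntegral.integral_same

lemma continuousOn_gArcsin (hp : 1 < p) (hq : 1 ≤ q) :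
    ContinuousOn (gArcsin p q) (Icc 0 1) := by
  have h := intervalIntegral.continuousOn_primitive_interval'
    (intervalIntegrable_gArcsin_integrand hp hq) left_mem_uIcc
  rwa [uIcc_of_le zero_le_one] at h

lemma strictMonoOn_gArcsin (hp : 1 < p) (hq : 1 ≤ q) :
    StrictMonoOn (gArcsin p q) (Icc 0 1) := by
  refine strictMonoOn_of_deriv_pos (convex_Icc 0 1) (continuousOn_gArcsin hp hq) fun u hu => ?_
  rw [interior_Icc] at hu
  rw [(hasDerivAt_gArcsin (by linarith) hu).deriv]
  exact gArcsin_integrand_pos (by linarith) (Ioo_subset_Ico_self hu)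

lemma Icc_subset_image_gArcsin (hp : 1 < p) (hq : 1 ≤ q) :
    Icc 0 (gPi p q / 2) ⊆ gArcsin p q '' Icc 0 1 := by
  simpa [gPi] using intermediate_value_Icc zero_le_one (continuousOn_gArcsin hp hq)

lemma IsGSin.integral_comp {E : Type*} [NormedAddCommGroup E] [NormedSpace ℝ E]
    {S : ℝ → ℝ} (hS : IsGSin p q S) (hp : 1 < p) (hq : 1 ≤ q) {y : ℝ}
    (hy : y ∈ Icc (0:ℝ) 1) (g : ℝ → E) :
    ∫ t in (0:ℝ)..gArcsin p q y, g (S t) =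
      ∫ u in (0:ℝ)..y, (1 - u ^ q) ^ (-(1 / p)) • g u := by
  have hsub : Icc 0 y ⊆ Icc (0:ℝ) 1 := Icc_subset_Icc_right hy.2
  have hmono := (strictMonoOn_gArcsin hp hq).mono hsub
  have himage : gArcsin p q '' Ioo 0 y = Ioo 0 (gArcsin p q y) := by
    simpa using ((continuousOn_gArcsin hp hq).mono hsub).image_Ioo_of_strictMonoOn hy.1 hmono
  have hderiv : ∀ u ∈ Ioo 0 y,
      HasDerivWithinAt (gArcsin p q) ((1 - u ^ q) ^ (-(1 / p))) (Ioo 0 y) u := fun u hu =>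
    (hasDerivAt_gArcsin (by linarith) ⟨hu.1, hu.2.trans_le hy.2⟩).hasDerivWithinAt
  have hpos : 0 ≤ gArcsin p q y := by
    simpa using hmono.monotoneOn (left_mem_Icc.2 hy.1) (right_mem_Icc.2 hy.1) hy.1
  rw [intervalIntegral.integral_of_le hpos, intervalIntegral.integral_of_le hy.1,
    integral_Ioc_eq_integral_Ioo, integral_Ioc_eq_integral_Ioo, ← himage,
    integral_image_eq_integral_abs_deriv_smul measurableSet_Ioo hderiv
      (hmono.injOn.mono Ioo_subset_Icc_self)]
  refine setIntegral_congr_fun measurableSet_Ioo fun u hu => ?_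
  have hu1 : u ∈ Ico (0:ℝ) 1 := ⟨hu.1.le, hu.2.trans_le hy.2⟩
  rw [abs_of_pos (gArcsin_integrand_pos (by linarith) hu1), hS u (Ico_subset_Icc_self hu1)]

end GeneralizedArcsine

lemma lemniscate_integrand_eq {u : ℝ} (hu : u ^ 2 ≤ 1) :
    (1 - u ^ (4:ℝ)) ^ (-(1 / 2 : ℝ)) = (Real.sqrt (1 - (u ^ 2) ^ 2))⁻¹ := by
  rw [show u ^ (4:ℝ) = (u ^ 2) ^ 2 by norm_cast; ring, Real.sqrt_eq_rpow, Real.rpow_neg]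
  nlinarith

lemma hasDerivAt_half_arcsin_sq {u : ℝ} (hu : u ∈ Ioo (0:ℝ) 1) :
    HasDerivAt (fun v => 1 / 2 * Real.arcsin (v ^ 2))
      ((1 - u ^ (4:ℝ)) ^ (-(1 / 2 : ℝ)) * u) u := by
  have hu2 : u ^ 2 < 1 := by nlinarith [hu.1, hu.2]
  have hsq : HasDerivAt (fun v : ℝ => v ^ 2) (2 * u) u := by simpa using hasDerivAt_pow 2 u
  have harcsin : HasDerivAt Real.arcsin (1 / Real.sqrt (1 - (u ^ 2) ^ 2)) (u ^ 2) :=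
    Real.hasDerivAt_arcsin (by nlinarith) hu2.ne
  refine ((HasDerivAt.comp (h := fun v : ℝ => v ^ 2) u harcsin hsq).const_mul
    (1 / 2 : ℝ)).congr_deriv ?_
  rw [lemniscate_integrand_eq hu2.le]
  field_simp

lemma integral_lemniscate_integrand_mul {y : ℝ} (hy : y ∈ Icc (0:ℝ) 1) :
    ∫ u in (0:ℝ)..y, (1 - u ^ (4:ℝ)) ^ (-(1 / 2 : ℝ)) * u =
      1 / 2 * Real.arcsin (y ^ 2) := by
  have hsub : uIcc 0 y ⊆ uIcc (0:ℝ) 1 :=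
    uIcc_subset_uIcc_left (uIcc_of_le (zero_le_one' ℝ) ▸ hy)
  have hint : IntervalIntegrable (fun u : ℝ => (1 - u ^ (4:ℝ)) ^ (-(1 / 2 : ℝ)) * u)
      volume 0 y :=
    ((intervalIntegrable_gArcsin_integrand (by norm_num) (by norm_num)).mono_set
      hsub).mul_continuousOn continuousOn_id
  rw [intervalIntegral.integral_eq_sub_of_hasDerivAt_of_le hy.1 (by fun_prop)
    (fun u hu => hasDerivAt_half_arcsin_sq ⟨hu.1, hu.2.trans_le hy.2⟩) hint]
  simp

/-- Corollary 3.3, first part: `∫₀ˣ sl(t) dt = (1/2) arcsin(sl²(x))` for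
`x ∈ [0, ϖ/2]`, where `sl = sin_{2,4}` is the lemniscate sine and `ϖ = π_{2,4}`. -/
theorem stmt_6 (S : ℝ → ℝ) (hS : IsGSin 2 4 S)
    (x : ℝ) (hx : x ∈ Icc (0:ℝ) (gPi 2 4 / 2)) :
    ∫ t in (0:ℝ)..x, S t = (1 / 2) * Real.arcsin ((S x) ^ 2) := by
  obtain ⟨y, hy, rfl⟩ := Icc_subset_image_gArcsin (by norm_num) (by norm_num) hx
  rw [hS y hy, ← integral_lemniscate_integrand_mul hy]
  simpa using hS.integral_comp (by norm_num) (by norm_num) hy id
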